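/- For n ≥ 2, the homomorphism λ_n : Spin(n) → SO(n) is surjective: every A ∈ SO(n) equals λ_n(x) for some x ∈ Spin(n), i.e. there exists x ∈ Spin(n) with x v x̄ = A v for all v ∈ ℝⁿ. -/

import Mathlib

/-!
The Clifford algebra `C_n` of the negative-definite quadratic form on `ℝⁿ`,
its grade involution, reversal and conjugation, and the spin group
`Spin(n) = { x | x' = x ∧ x * x̄ = 1 }`, with `λ_n(x) v = x v x̄`.
-/

open CliffordAlgebra Matrix

noncomputable section

/-- The negative-definite quadratic form `v ↦ -∑ i, (v i)²` on `ℝⁿ`. -/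
def Qneg (n : ℕ) : QuadraticForm ℝ (Fin n → ℝ) :=
  QuadraticMap.weightedSumSquares ℝ (fun _ : Fin n => (-1 : ℝ))

/-- The Clifford conjugation `x̄ = (x')*` : grade involution followed by reversal. -/
def cliffConj {n : ℕ} (x : CliffordAlgebra (Qneg n)) : CliffordAlgebra (Qneg n) :=
  reverse (involute x)

/-- The spin group `Spin(n) = { x ∈ C_n | x' = x ∧ x x̄ = 1 }`. -/
def SpinSet (n : ℕ) : Set (CliffordAlgebra (Qneg n)) :=
  {x | involute x = x ∧ x * cliffConj x = 1}

/-!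
By the Cartan–Dieudonné theorem `A` is a product of reflections in unit vectors `u₁, …, u_k`,
and `k` is even because each reflection has determinant `-1`. In `C_n` a unit vector satisfies
`u² = -1` and `u v + v u = -2 ⟪u, v⟫`, so `u v u = v - 2 ⟪u, v⟫ u` is the reflection of `v`.
Hence `x = u₁ ⋯ u_k` satisfies `x' = x`, its conjugate is `x̄ = u_k ⋯ u₁`, so that
`x x̄ = (-1)^k = 1` and `x v x̄ = A v`.
-/

open scoped RealInnerProductSpace

namespace CliffordAlgebra

variable {R M : Type*} [CommRing R] [AddCommGroup M] [Module R M] {Q : QuadraticForm R M}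

theorem prod_map_ι_mul_reverse_prod_map_ι (L : List M) :
    (L.map (ι Q)).prod * (L.map (ι Q)).reverse.prod = algebraMap R _ (L.map Q).prod := by
  induction L with
  | nil => simp
  | cons u t ih =>
    simp only [List.map_cons, List.prod_cons, List.reverse_cons, List.prod_append,
      List.prod_nil, mul_one, mul_assoc]
    rw [← mul_assoc _ _ (ι Q u), ih, Algebra.commutes, ← mul_assoc, ι_sq_scalar, ← map_mul]

end CliffordAlgebra

section Reflections

variable {F : Type*} [NormedAddCommGroup F] [InnerProductSpace ℝ F]

open Submodule

theorem exists_norm_eq_one_prod_map_reflection_eq (l : List F) :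
    ∃ L : List F, (∀ u ∈ L, ‖u‖ = 1) ∧
      (L.map fun u => reflection (ℝ ∙ u)ᗮ).prod = (l.map fun u => reflection (ℝ ∙ u)ᗮ).prod := by
  induction l with
  | nil => exact ⟨[], by simp, rfl⟩
  | cons u l ih =>
    obtain ⟨L, hL, hprod⟩ := ih
    rcases eq_or_ne u 0 with rfl | hu
    · refine ⟨L, hL, ?_⟩
      have : reflection (⊤ : Submodule ℝ F) = 1 :=
        LinearIsometryEquiv.ext fun v => reflection_mem_subspace_eq_self mem_top
      simp [hprod, this]
    · refine ⟨(‖u‖⁻¹ • u) :: L, ?_, ?_⟩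
      · simpa [norm_smul, hu] using hL
      · simp [hprod, span_singleton_smul_eq (inv_ne_zero (norm_ne_zero_iff.mpr hu)).isUnit]

theorem det_prod_map_reflection [FiniteDimensional ℝ F] (L : List F) (hL : ∀ u ∈ L, u ≠ 0) :
    LinearMap.det ((L.map fun u => reflection (ℝ ∙ u)ᗮ).prod.toLinearEquiv : F →ₗ[ℝ] F)
      = (-1) ^ L.length := by
  induction L with
  | nil => exact LinearMap.det_id
  | cons u t ih =>
    rw [List.forall_mem_cons] at hL
    rw [List.map_cons, List.prod_cons, List.length_cons, pow_succ', LinearIsometryEquiv.mul_def,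
      LinearIsometryEquiv.toLinearEquiv_trans, LinearEquiv.coe_trans, LinearMap.det_comp, ih hL.2,
      det_reflection, orthogonal_orthogonal, finrank_span_singleton hL.1, pow_one]

theorem LinearIsometryEquiv.exists_even_norm_eq_one_prod_map_reflection [FiniteDimensional ℝ F]
    (φ : F ≃ₗᵢ[ℝ] F) (hφ : LinearMap.det (φ.toLinearEquiv : F →ₗ[ℝ] F) = 1) :
    ∃ L : List F, (∀ u ∈ L, ‖u‖ = 1) ∧ Even L.length ∧
      φ = (L.map fun u => reflection (ℝ ∙ u)ᗮ).prod := by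
  obtain ⟨l, -, rfl⟩ := φ.reflections_generate_dim
  obtain ⟨L, hL, hprod⟩ := exists_norm_eq_one_prod_map_reflection_eq l
  refine ⟨L, hL, ?_, hprod.symm⟩
  have hL0 : ∀ u ∈ L, u ≠ 0 := fun u hu => norm_ne_zero_iff.mp (by simp [hL u hu])
  rw [← hprod, det_prod_map_reflection L hL0] at hφ
  exact (neg_one_pow_eq_one_iff_even (by norm_num)).mp hφ

end Reflections

namespace Matrix.UnitaryGroup

variable {𝕜 ι : Type*} [RCLike 𝕜] [Fintype ι] [DecidableEq ι]

def toLinearIsometryEquiv (A : unitaryGroup ι 𝕜) : EuclideanSpace 𝕜 ι ≃ₗᵢ[𝕜] EuclideanSpace 𝕜 ι :=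
  Unitary.linearIsometryEquiv ⟨toEuclideanCLM (n := ι) (𝕜 := 𝕜) A.1, Unitary.map_mem _ A.2⟩

@[simp]
theorem ofLp_toLinearIsometryEquiv (A : unitaryGroup ι 𝕜) (v : EuclideanSpace 𝕜 ι) :
    (toLinearIsometryEquiv A v).ofLp = A.1 *ᵥ v.ofLp :=
  rfl

theorem det_toLinearIsometryEquiv (A : unitaryGroup ι 𝕜) :
    LinearMap.det ((toLinearIsometryEquiv A).toLinearEquiv : EuclideanSpace 𝕜 ι →ₗ[𝕜] _) =
      A.1.det :=
  LinearMap.det_toLin _ _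

end Matrix.UnitaryGroup

section Spin

variable {n : ℕ}

theorem Qneg_ofLp (v : EuclideanSpace ℝ (Fin n)) : Qneg n v.ofLp = -‖v‖ ^ 2 := by
  rw [EuclideanSpace.real_norm_sq_eq]
  simp [Qneg, QuadraticMap.weightedSumSquares_apply, sq]

theorem polar_Qneg_ofLp (u v : EuclideanSpace ℝ (Fin n)) :
    QuadraticMap.polar (Qneg n) u.ofLp v.ofLp = -(2 * ⟪u, v⟫) := by
  rw [QuadraticMap.polar, ← WithLp.ofLp_add, Qneg_ofLp, Qneg_ofLp, Qneg_ofLp, norm_add_sq_real]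
  ring

theorem ι_mul_ι_mul_ι_ofLp_of_norm_eq_one {u : EuclideanSpace ℝ (Fin n)} (hu : ‖u‖ = 1)
    (v : EuclideanSpace ℝ (Fin n)) :
    ι (Qneg n) u.ofLp * ι (Qneg n) v.ofLp * ι (Qneg n) u.ofLp =
      ι (Qneg n) ((ℝ ∙ u)ᗮ.reflection v).ofLp := by
  rw [ι_mul_ι_mul_ι, polar_Qneg_ofLp, Qneg_ofLp, Submodule.reflection_orthogonal_apply,
    Submodule.reflection_singleton_apply, hu]
  congr 1
  simp only [WithLp.ofLp_neg, WithLp.ofLp_sub, WithLp.ofLp_smul]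
  module

theorem prod_map_ι_mul_ι_mul_reverse_prod_map_ι_ofLp {L : List (EuclideanSpace ℝ (Fin n))}
    (hL : ∀ u ∈ L, ‖u‖ = 1) (v : EuclideanSpace ℝ (Fin n)) :
    ((L.map WithLp.ofLp).map (ι (Qneg n))).prod * ι (Qneg n) v.ofLp *
        ((L.map WithLp.ofLp).map (ι (Qneg n))).reverse.prod =
      ι (Qneg n) ((L.map fun u => (ℝ ∙ u)ᗮ.reflection).prod v).ofLp := by
  induction L with
  | nil => simp
  | cons u t ih =>
    rw [List.forall_mem_cons] at hL
    simp only [List.map_cons, List.prod_cons, List.reverse_cons, List.prod_append,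
      List.prod_nil, mul_one, LinearIsometryEquiv.coe_mul, Function.comp_apply]
    rw [← ι_mul_ι_mul_ι_ofLp_of_norm_eq_one hL.1, ← ih hL.2]
    simp only [mul_assoc]

theorem cliffConj_prod_map_ι (L : List (Fin n → ℝ)) :
    cliffConj (L.map (ι (Qneg n))).prod =
      (-1 : ℝ) ^ L.length • (L.map (ι (Qneg n))).reverse.prod := by
  rw [cliffConj, involute_prod_map_ι, map_smul, reverse_prod_map_ι]

theorem prod_map_ι_mem_spinSet {L : List (Fin n → ℝ)} (hL : ∀ u ∈ L, Qneg n u = -1)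
    (hL_even : Even L.length) : (L.map (ι (Qneg n))).prod ∈ SpinSet n := by
  have hQ : (L.map (Qneg n)).prod = 1 := by
    rw [List.prod_eq_pow_card _ (-1) (by simpa using hL), List.length_map, hL_even.neg_one_pow]
  refine ⟨?_, ?_⟩
  · rw [involute_prod_map_ι, hL_even.neg_one_pow, one_smul]
  · rw [cliffConj_prod_map_ι, hL_even.neg_one_pow, one_smul, prod_map_ι_mul_reverse_prod_map_ι,
      hQ, map_one]

end Spin

theorem lambda_surjective_general (n : ℕ) (A : Matrix (Fin n) (Fin n) ℝ)
    (hA : Aᵀ * A = 1) (hdet : A.det = 1) :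
    ∃ x ∈ SpinSet n, ∀ v : Fin n → ℝ,
      x * ι (Qneg n) v * cliffConj x = ι (Qneg n) (A *ᵥ v) := by
  let φ := UnitaryGroup.toLinearIsometryEquiv ⟨A, mem_unitaryGroup_iff'.mpr hA⟩
  obtain ⟨L, hL, hL_even, hφ⟩ := φ.exists_even_norm_eq_one_prod_map_reflection
    (by rw [UnitaryGroup.det_toLinearIsometryEquiv, hdet])
  have hL' : ∀ u ∈ L.map WithLp.ofLp, Qneg n u = -1 :=
    List.forall_mem_map.mpr fun u hu => by rw [Qneg_ofLp, hL u hu, one_pow]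
  refine ⟨_, prod_map_ι_mem_spinSet hL' (by simpa using hL_even), fun v => ?_⟩
  rw [cliffConj_prod_map_ι, List.length_map, hL_even.neg_one_pow, one_smul,
    prod_map_ι_mul_ι_mul_reverse_prod_map_ι_ofLp hL (WithLp.toLp 2 v), ← hφ,
    UnitaryGroup.ofLp_toLinearIsometryEquiv]

/-- for `n ≥ 2`, `λ_n : Spin(n) → SO(n)` is surjective: every
`A ∈ SO(n)` (i.e. `Aᵀ A = 1`, `det A = 1`) is of the form `λ_n(x)` for some
`x ∈ Spin(n)`, i.e. `x v x̄ = A v` for all `v ∈ ℝⁿ`. -/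
theorem lambda_surjective (n : ℕ) (hn : 2 ≤ n) (A : Matrix (Fin n) (Fin n) ℝ)
    (hA : Aᵀ * A = 1) (hdet : A.det = 1) :
    ∃ x ∈ SpinSet n, ∀ v : Fin n → ℝ,
      x * ι (Qneg n) v * cliffConj x = ι (Qneg n) (A *ᵥ v) :=
  lambda_surjective_general n A hA hdet
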